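/- arXiv:2406.07993 — 2 statements merged into one kernel-verified Lean document; each statement's English description precedes it below -/
import Mathlib

section
/- In the ARLOD model with learning rate α ∈ (0,1) and exploration rate ε ∈ (0,1) on a finite connected graph G, consensus is guaranteed: with probability one there exists a finite time t0 and an opinion o ∈ {-1,1} such that Q^i_o(t) > Q^i_{-o}(t) for all agents i ∈ {1,...,N} and all t ≥ t0. -/
open MeasureTheory ProbabilityTheory

noncomputable section

/-- The preferred opinion of an agent with Q-values `q : Bool → ℝ` (`true` encodes
opinion `1`, `false` encodes opinion `-1`): the opinion with the larger Q-value
(opinion `1` in case of a tie). -/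
def prefOf (q : Bool → ℝ) : Bool := if q false ≤ q true then true else false

/-- One round of the ARLOD model: agent `i` is selected and expresses an opinion to the
selected neighbour `j` (its preferred opinion if the exploration flag `e` is `false`,
the other opinion if `e` is `true`); `j` responds honestly with reward `1` if the
expressed opinion is `j`'s preferred opinion and `-1` otherwise, and `i` updates the
Q-value of the expressed opinion by `Q ← (1−α)Q + αR`.  (If the sampled pair `(i,j)` is
not an edge of `G` — an event of probability zero — nothing happens.) -/
def arlodStep {N : ℕ} (G : SimpleGraph (Fin N)) [DecidableRel G.Adj] (α : ℝ)
    (q : Fin N → Bool → ℝ) (i j : Fin N) (e : Bool) : Fin N → Bool → ℝ :=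
  if G.Adj i j then
    let expressed : Bool := if e then !(prefOf (q i)) else prefOf (q i)
    let R : ℝ := if expressed = prefOf (q j) then 1 else -1
    fun v o => if v = i ∧ o = expressed then (1 - α) * q i expressed + α * R else q v o
  else q

/-!
Every round in which the speaker addresses a listener preferring `o` moves the speaker towards
`o`: expressing `o` is rewarded and raises `Q_o`, expressing `!o` is punished and lowers `Q_{!o}`.
Hence consensus is absorbing. A speaker that addresses such a listener often enough, alternately
exploiting and exploring, ends up strictly preferring `o`, whatever its Q-values in `[-1, 1]`.
Teaching in this way first along one edge and then along a closed walk through all agents gives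
a fixed finite sequence of rounds that leads every state to consensus. Each of its rounds has
positive probability, so by independence and the second Borel–Cantelli lemma the sequence occurs
almost surely. The law of the rounds also forces `G` to have an edge.
-/

open scoped ENNReal

lemma SimpleGraph.Connected.exists_walk_forall_mem_support {V : Type*} [Finite V]
    {G : SimpleGraph V} (hG : G.Connected) (u v : V) :
    ∃ w : G.Walk u v, ∀ x, x ∈ w.support := by
  classical
  have := Fintype.ofFinite V
  suffices h : ∀ s : Finset V, ∃ w : G.Walk u v, ∀ x ∈ s, x ∈ w.support by
    simpa using h Finset.univ
  intro s
  induction s using Finset.induction_on with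
  | empty => exact ⟨(hG.preconnected u v).some, by simp⟩
  | insert x s _ ih =>
    obtain ⟨w, hw⟩ := ih
    obtain ⟨p⟩ := hG.preconnected u x
    refine ⟨p.append (p.reverse.append w), fun y hy => ?_⟩
    rcases Finset.mem_insert.1 hy with rfl | hy
    · simp
    · simp [SimpleGraph.Walk.mem_support_append_iff, hw y hy]

lemma List.foldl_eq_of_succ_eq {γ β : Type*} (f : γ → β → γ) {x : ℕ → γ}
    {v : ℕ → β} (hx : ∀ t, x (t + 1) = f (x t) (v t)) {s : List β} {t₀ : ℕ}
    (hs : ∀ k (hk : k < s.length), v (t₀ + k) = s[k]) :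
    x (t₀ + s.length) = s.foldl f (x t₀) := by
  induction s generalizing t₀ with
  | nil => rfl
  | cons z s ih =>
    have hz : v t₀ = z := hs 0 (by simp)
    have hs' : ∀ k (hk : k < s.length), v (t₀ + 1 + k) = s[k] := fun k hk => by
      rw [Nat.add_right_comm]
      exact hs (k + 1) (by simpa using hk)
    rw [List.length_cons, ← Nat.add_assoc, Nat.add_right_comm, ih hs', List.foldl_cons, hx, hz]

lemma MeasureTheory.exists_measure_preimage_singleton_ne_zero {Ω β : Type*} [MeasurableSpace Ω]
    [Countable β] (μ : Measure Ω) [NeZero μ] (f : Ω → β) :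
    ∃ z, μ (f ⁻¹' {z}) ≠ 0 := by
  by_contra! h
  have : μ Set.univ = 0 := by
    rw [← Set.preimage_univ (f := f), ← Set.iUnion_of_singleton, Set.preimage_iUnion]
    exact measure_iUnion_null h
  exact NeZero.ne μ (Measure.measure_univ_eq_zero.mp this)

lemma ProbabilityTheory.iIndepFun.ae_exists_occurrence {Ω β : Type*} [MeasurableSpace Ω]
    [MeasurableSpace β] [MeasurableSingletonClass β] {P : Measure Ω} [IsProbabilityMeasure P]
    {V : ℕ → Ω → β}
    (hindep : iIndepFun V P) (hmeas : ∀ t, Measurable (V t)) {p : β → ℝ≥0∞}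
    (hlaw : ∀ t z, P (V t ⁻¹' {z}) = p z) {s : List β} (hs : ∀ z ∈ s, p z ≠ 0) :
    ∀ᵐ ω ∂P, ∃ t₀, ∀ k (hk : k < s.length), V (t₀ + k) ω = s[k] := by
  classical
  obtain hL | hL := Nat.eq_zero_or_pos s.length
  · exact ae_of_all _ fun ω => ⟨0, fun k hk => absurd hk (by omega)⟩
  set L := s.length
  -- The events `B n` that `s` is spelled by the `n`-th block of `L` rounds are independent and
  -- have the same positive probability, so the second Borel–Cantelli lemma applies.
  let σ : ℕ → β := fun t => s[t % L]'(Nat.mod_lt _ hL)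
  let block : ℕ → Finset ℕ := fun n => (Finset.range L).image (L * n + ·)
  let B : ℕ → Set Ω := fun n => ⋂ t ∈ block n, V t ⁻¹' {σ t}
  have hσ : ∀ n k, σ (L * n + k) = σ k := fun n k => by simp [σ]
  have hdiv : ∀ n t, t ∈ block n → t / L = n := by
    simp only [block, Finset.mem_image, Finset.mem_range]
    rintro n _ ⟨k, hk, rfl⟩
    rw [Nat.mul_add_div hL, Nat.div_eq_of_lt hk, add_zero]
  have hprod (T : Finset ℕ) : P (⋂ t ∈ T, V t ⁻¹' {σ t}) = ∏ t ∈ T, p (σ t) := by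
    rw [hindep.measure_inter_preimage_eq_mul T (sets := fun t => {σ t})
      fun _ _ => measurableSet_singleton _]
    simp only [hlaw]
  have hBmeas : ∀ n, MeasurableSet (B n) := fun n =>
    Finset.measurableSet_biInter _ fun t _ => hmeas t (measurableSet_singleton _)
  have hB : ∀ n, P (B n) = ∏ k ∈ Finset.range L, p (σ k) := fun n => by
    rw [hprod, Finset.prod_image fun _ _ _ _ h => Nat.add_left_cancel h]
    simp only [hσ]
  have hindepB : iIndepSet B P := by
    refine (iIndepSet_iff_meas_biInter hBmeas).2 fun S => ?_
    have hdisj : (S : Set ℕ).PairwiseDisjoint block := fun n _ m _ hnm =>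
      Finset.disjoint_left.2 fun t hn hm => hnm ((hdiv n t hn).symm.trans (hdiv m t hm))
    simp only [B]
    rw [← Finset.set_biInter_biUnion, hprod, Finset.prod_biUnion hdisj]
    simp only [hprod]
  have hsum : ∑' n, P (B n) = ∞ := by
    simp only [hB]
    refine ENNReal.tsum_const_eq_top_of_ne_zero (Finset.prod_ne_zero_iff.2 fun k hk => ?_)
    exact hs _ (List.getElem_mem _)
  have hU : P (⋃ n, B n) = 1 :=
    le_antisymm prob_le_one ((measure_limsup_eq_one hBmeas hindepB hsum).symm.trans_le
      (measure_mono (Filter.limsup_le_iSup (u := B))))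
  filter_upwards [(prob_compl_eq_zero_iff (MeasurableSet.iUnion hBmeas)).2 hU] with ω hω
  obtain ⟨n, hn⟩ := Set.mem_iUnion.1 hω
  refine ⟨L * n, fun k hk => ?_⟩
  have := Set.mem_iInter₂.1 hn (L * n + k)
    (Finset.mem_image_of_mem _ (Finset.mem_range.2 hk))
  rw [Set.mem_preimage, Set.mem_singleton_iff, hσ] at this
  exact this.trans (by simp only [σ]; congr 1; exact Nat.mod_eq_of_lt hk)

namespace Arlod

section Agent

variable (α : ℝ)

def QBounded (x : Bool → ℝ) : Prop := ∀ b, x b ∈ Set.Icc (-1 : ℝ) 1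

def Improves (o : Bool) (x y : Bool → ℝ) : Prop := x o ≤ y o ∧ y (!o) ≤ x (!o)

lemma Improves.trans {o : Bool} {x y z : Bool → ℝ} (hxy : Improves o x y)
    (hyz : Improves o y z) : Improves o x z :=
  ⟨hxy.1.trans hyz.1, hyz.2.trans hxy.2⟩

lemma prefOf_eq_of_lt {x : Bool → ℝ} {o : Bool} (h : x (!o) < x o) : prefOf x = o := by
  cases o <;> simp_all [prefOf, le_of_lt]

lemma Improves.prefOf_eq {o : Bool} {x y : Bool → ℝ} (h : Improves o x y) (hx : prefOf x = o) :
    prefOf y = o := by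
  cases o <;> simp only [prefOf, Improves, Bool.not_true, Bool.not_false] at hx h ⊢ <;>
    split_ifs at hx ⊢ <;> simp_all <;> linarith

lemma Improves.lt {o : Bool} {x y : Bool → ℝ} (h : Improves o x y) (hx : x (!o) < x o) :
    y (!o) < y o :=
  (h.2.trans_lt hx).trans_le h.1

def expressed (e : Bool) (x : Bool → ℝ) : Bool := if e then !prefOf x else prefOf x

/-- The new Q-values of a speaker whose listener prefers `o`. -/
def speakTo (o e : Bool) (x : Bool → ℝ) : Bool → ℝ :=
  Function.update x (expressed e x)
    ((1 - α) * x (expressed e x) + α * if expressed e x = o then 1 else -1)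

def pairStep (o : Bool) (x : Bool → ℝ) : Bool → ℝ :=
  speakTo α o true (speakTo α o false x)

variable {α}

lemma speakTo_of_expressed_eq {o e : Bool} {x : Bool → ℝ} (h : expressed e x = o) :
    speakTo α o e x o = (1 - α) * x o + α := by
  subst h; simp [speakTo]

lemma speakTo_of_expressed_eq_not {o e : Bool} {x : Bool → ℝ} (h : expressed e x = !o) :
    speakTo α o e x (!o) = (1 - α) * x (!o) - α := by
  simp [speakTo, h, sub_eq_add_neg]

lemma qBounded_speakTo (hα : α ∈ Set.Icc (0 : ℝ) 1) {x : Bool → ℝ} (hx : QBounded x)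
    (o e : Bool) : QBounded (speakTo α o e x) := by
  obtain ⟨hα0, hα1⟩ := hα
  intro b
  obtain ⟨hb0, hb1⟩ := hx b
  rcases eq_or_ne b (expressed e x) with rfl | hb
  · simp only [speakTo, Function.update_self]
    constructor <;> split_ifs <;> nlinarith
  · simpa [speakTo, hb] using hx b

lemma improves_speakTo (hα : 0 ≤ α) {x : Bool → ℝ} (hx : QBounded x) (o e : Bool) :
    Improves o x (speakTo α o e x) := by
  rcases Bool.eq_or_eq_not (expressed e x) o with h | h
  · refine ⟨by rw [speakTo_of_expressed_eq h]; nlinarith [(hx o).2], ?_⟩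
    simp [speakTo, h]
  · refine ⟨by simp [speakTo, h], ?_⟩
    rw [speakTo_of_expressed_eq_not h]; nlinarith [(hx (!o)).1]

lemma qBounded_pairStep (hα : α ∈ Set.Icc (0 : ℝ) 1) {x : Bool → ℝ} (hx : QBounded x)
    (o : Bool) : QBounded (pairStep α o x) :=
  qBounded_speakTo hα (qBounded_speakTo hα hx o false) o true

lemma improves_pairStep (hα : α ∈ Set.Icc (0 : ℝ) 1) {x : Bool → ℝ} (hx : QBounded x)
    (o : Bool) : Improves o x (pairStep α o x) :=
  (improves_speakTo hα.1 hx o false).trans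
    (improves_speakTo hα.1 (qBounded_speakTo hα hx o false) o true)

/-- Exploiting and then exploring expresses each opinion once, unless the first round already
switches the speaker to `o`. -/
lemma pairStep_progress (hα : α ∈ Set.Icc (0 : ℝ) 1) {x : Bool → ℝ} (hx : QBounded x)
    (o : Bool) :
    1 + pairStep α o x (!o) ≤ (1 - α) * (1 + x (!o)) ∧
      (prefOf x = o → 2 * α - 1 ≤ pairStep α o x o) ∧
      (2 * α - 1 ≤ pairStep α o x o ∨ prefOf (pairStep α o x) = o) := by
  obtain ⟨hα0, hα1⟩ := hα
  set x₁ := speakTo α o false x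
  have hx₁ : QBounded x₁ := qBounded_speakTo ⟨hα0, hα1⟩ hx o false
  have h₁ : Improves o x x₁ := improves_speakTo hα0 hx o false
  have h₂ : Improves o x₁ (pairStep α o x) := improves_speakTo hα0 hx₁ o true
  obtain ⟨hxo, -⟩ := hx o
  obtain ⟨hxn, -⟩ := hx (!o)
  rcases Bool.eq_or_eq_not (prefOf x) o with hp | hp
  · have hx₁o : x₁ o = (1 - α) * x o + α := speakTo_of_expressed_eq (by simp [expressed, hp])
    have hx₂n : pairStep α o x (!o) = (1 - α) * x₁ (!o) - α :=
      speakTo_of_expressed_eq_not (by simpa [expressed] using h₁.prefOf_eq hp)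
    have hup : 2 * α - 1 ≤ pairStep α o x o := by nlinarith [h₂.1]
    exact ⟨by nlinarith [h₁.2], fun _ => hup, Or.inl hup⟩
  · have hx₁n : x₁ (!o) = (1 - α) * x (!o) - α :=
      speakTo_of_expressed_eq_not (by simp [expressed, hp])
    refine ⟨by linarith [h₂.2], fun h => absurd (h.symm.trans hp) (by simp), ?_⟩
    rcases Bool.eq_or_eq_not (prefOf x₁) o with hp₁ | hp₁
    · exact Or.inr (h₂.prefOf_eq hp₁)
    · have hx₂o : pairStep α o x o = (1 - α) * x₁ o + α :=
        speakTo_of_expressed_eq (by simpa [expressed] using hp₁)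
      exact Or.inl (by nlinarith [(hx₁ o).1])

lemma qBounded_iterate_pairStep (hα : α ∈ Set.Icc (0 : ℝ) 1) (o : Bool) (n : ℕ)
    {x : Bool → ℝ} (hx : QBounded x) : QBounded ((pairStep α o)^[n] x) := by
  induction n generalizing x with
  | zero => exact hx
  | succ n ih => exact ih (qBounded_pairStep hα hx o)

lemma improves_iterate_pairStep (hα : α ∈ Set.Icc (0 : ℝ) 1) (o : Bool) (n : ℕ)
    {x : Bool → ℝ} (hx : QBounded x) : Improves o x ((pairStep α o)^[n] x) := by
  induction n generalizing x with
  | zero => exact ⟨le_rfl, le_rfl⟩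
  | succ n ih => exact (improves_pairStep hα hx o).trans (ih (qBounded_pairStep hα hx o))

lemma one_add_iterate_pairStep_not_le (hα : α ∈ Set.Icc (0 : ℝ) 1) (o : Bool) (n : ℕ)
    {x : Bool → ℝ} (hx : QBounded x) :
    1 + (pairStep α o)^[n] x (!o) ≤ (1 - α) ^ n * (1 + x (!o)) := by
  induction n with
  | zero => simp
  | succ n ih =>
    rw [Function.iterate_succ_apply', pow_succ]
    have h := (pairStep_progress hα (qBounded_iterate_pairStep hα o n hx) o).1
    nlinarith [hα.2]

lemma two_mul_sub_one_le_iterate_pairStep (hα : α ∈ Set.Icc (0 : ℝ) 1) (o : Bool) (n : ℕ)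
    {x : Bool → ℝ} (hx : QBounded x) : 2 * α - 1 ≤ (pairStep α o)^[n + 2] x o := by
  have hx₁ := qBounded_pairStep hα hx o
  have hx₂ : 2 * α - 1 ≤ pairStep α o (pairStep α o x) o := by
    rcases (pairStep_progress hα hx o).2.2 with h | h
    · exact h.trans (improves_pairStep hα hx₁ o).1
    · exact (pairStep_progress hα hx₁ o).2.1 h
  rw [Function.iterate_add_apply]
  exact hx₂.trans (improves_iterate_pairStep hα o n (qBounded_pairStep hα hx₁ o)).1

-- Two pairs lift `Q_o` to at least `2α - 1`, and after `n + 2` pairs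
-- `Q_{!o} ≤ -1 + 2 (1 - α) ^ n < 2α - 1`.
lemma iterate_pairStep_lt (hα : α ∈ Set.Icc (0 : ℝ) 1) (o : Bool) {n : ℕ}
    (hn : (1 - α) ^ n < α) {x : Bool → ℝ} (hx : QBounded x) :
    (pairStep α o)^[n + 2] x (!o) < (pairStep α o)^[n + 2] x o := by
  have hdown := one_add_iterate_pairStep_not_le hα o (n + 2) hx
  have hup := two_mul_sub_one_le_iterate_pairStep hα o n hx
  have hpow : (1 - α) ^ (n + 2) ≤ (1 - α) ^ n :=
    pow_le_pow_of_le_one (by linarith [hα.2]) (by linarith [hα.1]) (by omega)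
  obtain ⟨h0, h1⟩ := hx (!o)
  nlinarith [pow_nonneg (by linarith [hα.2] : (0 : ℝ) ≤ 1 - α) (n + 2)]

end Agent

section Network

variable {N : ℕ}

def teach (c a : Fin N) (n : ℕ) : List (Fin N × Fin N × Bool) :=
  (List.replicate n [(c, a, false), (c, a, true)]).flatten

def teachWalk {G : SimpleGraph (Fin N)} (n : ℕ) :
    ∀ {u v : Fin N}, G.Walk u v → List (Fin N × Fin N × Bool)
  | _, _, .nil => []
  | u, _, .cons (v := c) _ p => teach c u n ++ teachWalk n p

variable {G : SimpleGraph (Fin N)} in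
lemma adj_of_mem_teachWalk {n : ℕ} {u v : Fin N} (w : G.Walk u v) {z : Fin N × Fin N × Bool}
    (hz : z ∈ teachWalk n w) : G.Adj z.1 z.2.1 := by
  induction w with
  | nil => simp [teachWalk] at hz
  | cons h p ih =>
    rcases List.mem_append.1 hz with hz | hz
    · simp only [teach, List.mem_flatten, List.mem_replicate] at hz
      obtain ⟨l, ⟨-, rfl⟩, hz⟩ := hz
      rcases List.mem_pair.1 hz with rfl | rfl <;> exact h.symm
    · exact ih hz

variable (G : SimpleGraph (Fin N)) [DecidableRel G.Adj] (α : ℝ)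

def run (q : Fin N → Bool → ℝ) (l : List (Fin N × Fin N × Bool)) : Fin N → Bool → ℝ :=
  l.foldl (fun q z => arlodStep G α q z.1 z.2.1 z.2.2) q

def Consensus (o : Bool) (q : Fin N → Bool → ℝ) : Prop := ∀ i, q i (!o) < q i o

variable {G α}

lemma arlodStep_of_adj {q : Fin N → Bool → ℝ} {i j : Fin N} (h : G.Adj i j) (e : Bool) :
    arlodStep G α q i j e = Function.update q i (speakTo α (prefOf (q j)) e (q i)) := by
  ext v b
  rcases eq_or_ne v i with rfl | hv
  · by_cases hb : b = expressed e (q v)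
    · subst hb
      simp only [arlodStep, h, speakTo, expressed, Function.update_self, if_true, and_self]
      split_ifs <;> ring
    · simp_all [arlodStep, speakTo, expressed]
  · simp [arlodStep, h, hv]

lemma arlodStep_of_not_adj {q : Fin N → Bool → ℝ} {i j : Fin N} (h : ¬G.Adj i j) (e : Bool) :
    arlodStep G α q i j e = q := by
  simp [arlodStep, h]

lemma qBounded_arlodStep (hα : α ∈ Set.Icc (0 : ℝ) 1) {q : Fin N → Bool → ℝ}
    (hq : ∀ v, QBounded (q v)) (i j : Fin N) (e : Bool) (v : Fin N) :
    QBounded (arlodStep G α q i j e v) := by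
  by_cases h : G.Adj i j
  · rw [arlodStep_of_adj h]
    rcases eq_or_ne v i with rfl | hv
    · simpa using qBounded_speakTo hα (hq v) _ e
    · simpa [hv] using hq v
  · rw [arlodStep_of_not_adj h]
    exact hq v

lemma Consensus.arlodStep (hα : 0 ≤ α) {q : Fin N → Bool → ℝ} (hq : ∀ v, QBounded (q v))
    {o : Bool} (hc : Consensus o q) (i j : Fin N) (e : Bool) :
    Consensus o (arlodStep G α q i j e) := by
  by_cases h : G.Adj i j
  · rw [arlodStep_of_adj h, prefOf_eq_of_lt (hc j)]
    intro v
    rcases eq_or_ne v i with rfl | hv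
    · simpa using (improves_speakTo hα (hq v) o e).lt (hc v)
    · simpa [hv] using hc v
  · rwa [arlodStep_of_not_adj h]

lemma qBounded_run (hα : α ∈ Set.Icc (0 : ℝ) 1) {q : Fin N → Bool → ℝ}
    (hq : ∀ v, QBounded (q v)) (l : List (Fin N × Fin N × Bool)) (v : Fin N) :
    QBounded (run G α q l v) := by
  induction l generalizing q with
  | nil => exact hq v
  | cons z l ih => exact ih (qBounded_arlodStep hα hq z.1 z.2.1 z.2.2)

lemma run_append (q : Fin N → Bool → ℝ) (l₁ l₂ : List (Fin N × Fin N × Bool)) :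
    run G α q (l₁ ++ l₂) = run G α (run G α q l₁) l₂ :=
  List.foldl_append

lemma run_teach {c a : Fin N} (h : G.Adj c a) (n : ℕ) (q : Fin N → Bool → ℝ) :
    run G α q (teach c a n) = Function.update q c ((pairStep α (prefOf (q a)))^[n] (q c)) := by
  induction n generalizing q with
  | zero => simp [teach, run]
  | succ n ih =>
    have hpair : run G α q [(c, a, false), (c, a, true)] =
        Function.update q c (pairStep α (prefOf (q a)) (q c)) := by
      simp [run, arlodStep_of_adj h, h.ne', pairStep]
    change run G α q ([(c, a, false), (c, a, true)] ++ teach c a n) = _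
    rw [run_append, hpair, ih]
    simp [h.ne']

lemma lt_run_teachWalk (hα : α ∈ Set.Icc (0 : ℝ) 1) {n : ℕ} (hn : (1 - α) ^ n < α)
    {u v : Fin N} (w : G.Walk u v) {q : Fin N → Bool → ℝ} (hq : ∀ v, QBounded (q v))
    {o : Bool} (hu : q u (!o) < q u o) {y : Fin N} (hy : q y (!o) < q y o ∨ y ∈ w.support) :
    run G α q (teachWalk (n + 2) w) y (!o) < run G α q (teachWalk (n + 2) w) y o := by
  induction w generalizing q with
  | nil =>
    rcases hy with hy | hy
    · exact hy
    · rw [SimpleGraph.Walk.support_nil, List.mem_singleton] at hy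
      exact hy ▸ hu
  | @cons u c v h p ih =>
    have hq₁ := qBounded_run (G := G) hα hq (teach c u (n + 2))
    rw [teachWalk, run_append]
    rw [run_teach h.symm, prefOf_eq_of_lt hu] at hq₁ ⊢
    refine ih hq₁ (by simpa using iterate_pairStep_lt hα o hn (hq c)) ?_
    rcases eq_or_ne y c with rfl | hyc
    · exact Or.inr p.start_mem_support
    rw [SimpleGraph.Walk.support_cons, List.mem_cons] at hy
    rcases hy with hy | rfl | hy
    · exact Or.inl (by simpa [hyc] using hy)
    · exact Or.inl (by simpa [hyc] using hu)
    · exact Or.inr hy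

lemma exists_consensus_word (hα : α ∈ Set.Ioo (0 : ℝ) 1) (hG : G.Connected) {a b : Fin N}
    (hab : G.Adj a b) :
    ∃ s : List (Fin N × Fin N × Bool), (∀ z ∈ s, G.Adj z.1 z.2.1) ∧
      ∀ q : Fin N → Bool → ℝ, (∀ v, QBounded (q v)) →
        ∃ o, Consensus o (run G α q s) := by
  have hα' := Set.Ioo_subset_Icc_self hα
  obtain ⟨n, hn⟩ := exists_pow_lt_of_lt_one hα.1 (by linarith [hα.1] : 1 - α < 1)
  obtain ⟨w, hw⟩ := hG.exists_walk_forall_mem_support a a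
  refine ⟨teach a b (n + 2) ++ teachWalk (n + 2) w, fun z hz => ?_,
    fun q hq => ⟨prefOf (q b), fun y => ?_⟩⟩
  · rcases List.mem_append.1 hz with hz | hz
    · exact adj_of_mem_teachWalk (.cons hab.symm .nil) (List.mem_append_left _ hz)
    · exact adj_of_mem_teachWalk w hz
  · rw [run_append]
    refine lt_run_teachWalk hα' hn w (qBounded_run hα' hq _) ?_ (Or.inr (hw y))
    rw [run_teach hab]
    simpa using iterate_pairStep_lt hα' _ hn (hq a)

section Trajectory

variable {x : ℕ → Fin N → Bool → ℝ} {a j : ℕ → Fin N} {e : ℕ → Bool}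

lemma qBounded_trajectory (hα : α ∈ Set.Icc (0 : ℝ) 1)
    (hx : ∀ t, x (t + 1) = arlodStep G α (x t) (a t) (j t) (e t))
    (h0 : ∀ v, QBounded (x 0 v)) (t : ℕ) (v : Fin N) : QBounded (x t v) := by
  induction t generalizing v with
  | zero => exact h0 v
  | succ t ih => exact hx t ▸ qBounded_arlodStep hα ih _ _ _ v

lemma consensus_trajectory_of_le (hα : 0 ≤ α)
    (hx : ∀ t, x (t + 1) = arlodStep G α (x t) (a t) (j t) (e t))
    (hbdd : ∀ t v, QBounded (x t v)) {o : Bool} {t₀ t : ℕ} (h : Consensus o (x t₀))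
    (ht : t₀ ≤ t) : Consensus o (x t) := by
  induction t, ht using Nat.le_induction with
  | base => exact h
  | succ t _ ih => exact hx t ▸ ih.arlodStep hα (hbdd t) _ _ _

end Trajectory

variable (G) in
def roundLaw (ε : ℝ) (z : Fin N × Fin N × Bool) : ℝ≥0∞ :=
  ENNReal.ofReal ((1 / (N : ℝ)) * (if G.Adj z.1 z.2.1 then 1 / (G.degree z.1 : ℝ) else 0) *
    (if z.2.2 then ε else 1 - ε))

lemma roundLaw_eq_zero {ε : ℝ} {z : Fin N × Fin N × Bool} (h : ¬G.Adj z.1 z.2.1) :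
    roundLaw G ε z = 0 := by
  simp [roundLaw, h]

lemma roundLaw_ne_zero {ε : ℝ} (hε : ε ∈ Set.Ioo (0 : ℝ) 1) {z : Fin N × Fin N × Bool}
    (h : G.Adj z.1 z.2.1) : roundLaw G ε z ≠ 0 := by
  have hN : (0 : ℝ) < N := Nat.cast_pos.2 z.1.pos
  have hdeg : (0 : ℝ) < G.degree z.1 :=
    Nat.cast_pos.2 (G.degree_pos_iff_exists_adj _ |>.2 ⟨_, h⟩)
  have hexp : (0 : ℝ) < if z.2.2 then ε else 1 - ε := by split_ifs <;> linarith [hε.1, hε.2]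
  rw [roundLaw, if_pos h]
  exact (ENNReal.ofReal_pos.2 (by positivity)).ne'

end Network

end Arlod

open Arlod

theorem stmt3_general {N : ℕ} (G : SimpleGraph (Fin N)) [DecidableRel G.Adj]
    (hG : G.Connected) (α ε : ℝ) (hα : α ∈ Set.Ioo (0 : ℝ) 1) (hε : ε ∈ Set.Ioo (0 : ℝ) 1)
    {Ω : Type*} [MeasurableSpace Ω] (P : Measure Ω) [IsProbabilityMeasure P]
    (A J : ℕ → Ω → Fin N) (X : ℕ → Ω → Bool)
    (hmeas : ∀ t : ℕ, Measurable (fun ω => (A t ω, J t ω, X t ω)))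
    (hindep : iIndepFun (fun t ω => (A t ω, J t ω, X t ω)) P)
    (hlaw : ∀ (t : ℕ) (i j : Fin N) (e : Bool),
      P {ω | (A t ω, J t ω, X t ω) = (i, j, e)} =
        ENNReal.ofReal ((1 / (N : ℝ)) * (if G.Adj i j then 1 / (G.degree i : ℝ) else 0) *
          (if e then ε else 1 - ε)))
    (Q : ℕ → Ω → Fin N → Bool → ℝ) (q0 : Fin N → Bool → ℝ)
    (hQ0 : ∀ ω, Q 0 ω = q0) (hq0mem : ∀ i o, q0 i o ∈ Set.Icc (-1 : ℝ) 1)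
    (hdyn : ∀ (t : ℕ) (ω : Ω),
      Q (t + 1) ω = arlodStep G α (Q t ω) (A t ω) (J t ω) (X t ω)) :
    P {ω | ∃ t0 : ℕ, ∃ o : Bool, ∀ t ≥ t0, ∀ i, Q t ω i (!o) < Q t ω i o} = 1 := by
  have hα' := Set.Ioo_subset_Icc_self hα
  have hlaw' : ∀ t z, P ((fun ω => (A t ω, J t ω, X t ω)) ⁻¹' {z}) = roundLaw G ε z :=
    fun t z => hlaw t z.1 z.2.1 z.2.2
  obtain ⟨z, hz⟩ :=
    exists_measure_preimage_singleton_ne_zero P (fun ω => (A 0 ω, J 0 ω, X 0 ω))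
  have hab : G.Adj z.1 z.2.1 := by_contra fun h => hz (by rw [hlaw', roundLaw_eq_zero h])
  obtain ⟨s, hs_adj, hs⟩ := exists_consensus_word hα hG hab
  have hbdd : ∀ ω t v, QBounded (Q t ω v) := fun ω =>
    qBounded_trajectory hα' (hdyn · ω) (hQ0 ω ▸ hq0mem)
  refine (measure_congr (ae_eq_univ.mpr (ae_iff.mp ?_))).trans measure_univ
  filter_upwards [hindep.ae_exists_occurrence hmeas hlaw'
    fun z hz => roundLaw_ne_zero hε (hs_adj z hz)] with ω ⟨t₀, ht₀⟩
  obtain ⟨o, ho⟩ := hs _ (hbdd ω t₀)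
  have hrun : Q (t₀ + s.length) ω = run G α (Q t₀ ω) s :=
    List.foldl_eq_of_succ_eq _ (x := (Q · ω)) (v := fun t => (A t ω, J t ω, X t ω))
      (hdyn · ω) ht₀
  exact ⟨_, o, fun t ht =>
    consensus_trajectory_of_le hα'.1 (hdyn · ω) (hbdd ω) (hrun ▸ ho) ht⟩

/-- In the ARLOD model with learning rate `α ∈ (0,1)` and exploration rate
`ε ∈ (0,1)` on a finite connected graph `G`, consensus is guaranteed: with probability
one there exist a finite time `t0` and an opinion `o` such that
`Q^i_o(t) > Q^i_{-o}(t)` for all agents `i` and all `t ≥ t0`. -/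
theorem stmt3 {N : ℕ} (hN : 0 < N) (G : SimpleGraph (Fin N)) [DecidableRel G.Adj]
    (hG : G.Connected) (α ε : ℝ) (hα : α ∈ Set.Ioo (0 : ℝ) 1) (hε : ε ∈ Set.Ioo (0 : ℝ) 1)
    {Ω : Type*} [MeasurableSpace Ω] (P : Measure Ω) [IsProbabilityMeasure P]
    (A J : ℕ → Ω → Fin N) (X : ℕ → Ω → Bool)
    (hmeas : ∀ t : ℕ, Measurable (fun ω => (A t ω, J t ω, X t ω)))
    (hindep : iIndepFun (fun t ω => (A t ω, J t ω, X t ω)) P)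
    (hlaw : ∀ (t : ℕ) (i j : Fin N) (e : Bool),
      P {ω | (A t ω, J t ω, X t ω) = (i, j, e)} =
        ENNReal.ofReal ((1 / (N : ℝ)) * (if G.Adj i j then 1 / (G.degree i : ℝ) else 0) *
          (if e then ε else 1 - ε)))
    (Q : ℕ → Ω → Fin N → Bool → ℝ) (q0 : Fin N → Bool → ℝ)
    (hQ0 : ∀ ω, Q 0 ω = q0) (hq0mem : ∀ i o, q0 i o ∈ Set.Icc (-1 : ℝ) 1)
    (hdyn : ∀ (t : ℕ) (ω : Ω),
      Q (t + 1) ω = arlodStep G α (Q t ω) (A t ω) (J t ω) (X t ω)) :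
    P {ω | ∃ t0 : ℕ, ∃ o : Bool, ∀ t ≥ t0, ∀ i, Q t ω i (!o) < Q t ω i o} = 1 :=
  stmt3_general G hG α ε hα hε P A J X hmeas hindep hlaw Q q0 hQ0 hq0mem hdyn
end
end

section
/- In the ARLOD model with learning rate α ∈ (0,1) and exploration rate ε ∈ (0,1) on a finite connected graph with N agents, suppose at time t0 agent i prefers opinion o and has a neighbour k who prefers opinion −o. Fix ξ ∈ (0,α) and let r = ⌈log(ξ)/log(1−α)⌉. Then the probability that agent i's preferred opinion has switched to −o by time t0 + 2r + 2 is at least (1−ε)^{r+1} ε^{r+1} (1/(N(N−1)))^{2r+2}, which is strictly positive. -/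
open MeasureTheory ProbabilityTheory

noncomputable section

/-!
If for `2 (r + 1)` consecutive steps agent `i` is selected together with its neighbour `k`,
alternately exploiting and exploring, then `k` keeps its Q-values, and every exploit-explore
round either leaves `i` strictly preferring `k`'s opinion `c`, or maps the gap
`g = Q_c - Q_{¬c}` of `i` to `(1 - α) g + 2α`. Starting from `g ≥ -2`, after `r + 1` rounds
`g ≥ 2 - 4 (1 - α) ^ (r + 1) > 0` by the choice of `r`, so `i` has switched. This schedule
concerns only the choices made from time `t0` on, so it is independent of the state at `t0`,
and its probability is a product of `2 (r + 1)` factors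
`(1 - ε or ε) / (N deg i) ≥ (1 - ε or ε) / (N (N - 1))`.
-/

lemma pow_toNat_ceil_log_div_log_le {β ξ : ℝ} (hβ0 : 0 < β) (hβ1 : β < 1) (hξ : 0 < ξ) :
    β ^ (⌈Real.log ξ / Real.log β⌉).toNat ≤ ξ := by
  have hceil : Real.log ξ / Real.log β ≤ ((⌈Real.log ξ / Real.log β⌉).toNat : ℝ) :=
    calc Real.log ξ / Real.log β ≤ (⌈Real.log ξ / Real.log β⌉ : ℝ) := Int.le_ceil _
      _ ≤ _ := by exact_mod_cast Int.self_le_toNat _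
  rw [← Real.log_le_log_iff (by positivity) hξ, Real.log_pow]
  rwa [div_le_iff_of_neg (Real.log_neg hβ0 hβ1)] at hceil

/-- `(1 - α) ^ r ≤ ξ < α`, so `(1 - α) ^ (r + 1) < α (1 - α) ≤ 1 / 4`. -/
lemma one_sub_pow_toNat_ceil_succ_lt_half {α ξ : ℝ} (hα : α ∈ Set.Ioo (0 : ℝ) 1)
    (hξ : ξ ∈ Set.Ioo 0 α) :
    (1 - α) ^ ((⌈Real.log ξ / Real.log (1 - α)⌉).toNat + 1) < 1 / 2 := by
  obtain ⟨hα0, hα1⟩ := hα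
  have := pow_toNat_ceil_log_div_log_le (by linarith : 0 < 1 - α) (by linarith) hξ.1
  rw [pow_succ]
  nlinarith [hξ.2]

lemma Finset.prod_range_two_mul_bodd {M : Type*} [CommMonoid M] (f : Bool → M) (n : ℕ) :
    ∏ s ∈ Finset.range (2 * n), f s.bodd = (f false * f true) ^ n := by
  induction n with
  | zero => simp
  | succ n ih =>
    rw [show 2 * (n + 1) = 2 * n + 1 + 1 by ring, Finset.prod_range_succ, Finset.prod_range_succ,
      ih, pow_succ, mul_assoc]
    simp [Nat.bodd_mul]

section SimpleGraph

variable {V : Type*} [Fintype V] {G : SimpleGraph V} {i k : V}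

lemma SimpleGraph.one_div_card_mul_pos (hik : G.Adj i k) :
    0 < 1 / ((Fintype.card V : ℝ) * (Fintype.card V - 1)) := by
  have : (1 : ℝ) < Fintype.card V := by exact_mod_cast Fintype.one_lt_card_iff.mpr ⟨i, k, hik.ne⟩
  have : (0 : ℝ) < Fintype.card V - 1 := by linarith
  positivity

lemma SimpleGraph.one_div_card_mul_le [DecidableRel G.Adj] (hik : G.Adj i k) :
    1 / ((Fintype.card V : ℝ) * (Fintype.card V - 1)) ≤
      1 / (Fintype.card V : ℝ) * (1 / (G.degree i : ℝ)) := by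
  have hcard : (0 : ℝ) < Fintype.card V := by exact_mod_cast Fintype.card_pos_iff.mpr ⟨i⟩
  have hdeg : (0 : ℝ) < G.degree i := by
    exact_mod_cast G.degree_pos_iff_exists_adj i |>.mpr ⟨k, hik⟩
  have hdeg_le : (G.degree i : ℝ) ≤ Fintype.card V - 1 := by
    rw [le_sub_iff_add_le]; exact_mod_cast G.degree_lt_card_verts i
  rw [one_div_mul_one_div]
  gcongr

end SimpleGraph

lemma eq_of_inputs_eq {Ω S β : Type*} {Q : ℕ → Ω → S} {Y : ℕ → Ω → β} (F : S → β → S)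
    (hstep : ∀ t ω, Q (t + 1) ω = F (Q t ω) (Y t ω)) {ω ω' : Ω} (h0 : Q 0 ω = Q 0 ω') {t : ℕ}
    (h : ∀ s < t, Y s ω = Y s ω') : Q t ω = Q t ω' := by
  induction t with
  | zero => exact h0
  | succ t ih => rw [hstep, hstep, ih fun s hs => h s (by omega), h t (by omega)]

section iIndepFun

variable {Ω β : Type*} [MeasurableSpace Ω] {P : Measure Ω} [MeasurableSpace β]
  [MeasurableSingletonClass β]

lemma ProbabilityTheory.iIndepFun.measure_inter_eq_mul_of_determined {ι : Type*} [Countable β]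
    {Y : ι → Ω → β} (hY : iIndepFun Y P) (hm : ∀ t, Measurable (Y t)) {S T : Finset ι}
    (hST : Disjoint S T) {E F : Set Ω}
    (hE : ∀ ω ω', (∀ t ∈ S, Y t ω = Y t ω') → ω ∈ E → ω' ∈ E)
    (hF : ∀ ω ω', (∀ t ∈ T, Y t ω = Y t ω') → ω ∈ F → ω' ∈ F) :
    P (E ∩ F) = P E * P F := by
  have saturated : ∀ (U : Finset ι) (D : Set Ω),
      (∀ ω ω', (∀ t ∈ U, Y t ω = Y t ω') → ω ∈ D → ω' ∈ D) →
        D = (fun ω (t : U) => Y t ω) ⁻¹' ((fun ω (t : U) => Y t ω) '' D) := by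
    intro U D hD
    refine (Set.subset_preimage_image _ _).antisymm ?_
    rintro ω' ⟨ω, hω, heq⟩
    exact hD ω ω' (fun t ht => congrFun heq ⟨t, ht⟩) hω
  rw [saturated S E hE, saturated T F hF]
  exact (hY.indepFun_finset S T hST hm).measure_inter_preimage_eq_mul _ _
    (Set.to_countable _).measurableSet (Set.to_countable _).measurableSet

lemma ProbabilityTheory.iIndepFun.ofReal_pow_le_measure_alternating {Y : ℕ → Ω → β}
    (hY : iIndepFun Y P) (y : Bool → β) {p : Bool → ℝ} (hp0 : ∀ e, 0 ≤ p e)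
    (hp : ∀ t e, ENNReal.ofReal (p e) ≤ P (Y t ⁻¹' {y e})) (t₀ n : ℕ) :
    ENNReal.ofReal ((p false * p true) ^ n) ≤
      P (⋂ t ∈ Finset.Ico t₀ (t₀ + 2 * n), Y t ⁻¹' {y (t - t₀).bodd}) := by
  rw [hY.measure_inter_preimage_eq_mul _ fun _ _ => measurableSet_singleton _,
    Finset.prod_Ico_eq_prod_range, add_tsub_cancel_left, ← Finset.prod_range_two_mul_bodd,
    ENNReal.ofReal_prod_of_nonneg fun _ _ => hp0 _]
  simp only [add_tsub_cancel_left]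
  exact Finset.prod_le_prod' fun s _ => hp _ _

end iIndepFun

lemma prefOf_eq_of_lt {q : Bool → ℝ} {o : Bool} (h : q (!o) < q o) : prefOf q = o := by
  cases o <;> simp [prefOf] at h ⊢ <;> linarith

lemma le_of_prefOf_eq {q : Bool → ℝ} {o : Bool} (h : prefOf q = o) : q (!o) ≤ q o := by
  cases o <;> simp [prefOf] at h ⊢ <;> linarith

lemma prefOf_update_of_le {q : Bool → ℝ} {o : Bool} (h : prefOf q = o) {y : ℝ} (hy : q o ≤ y) :
    prefOf (Function.update q o y) = o := by
  have := le_of_prefOf_eq h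
  cases o <;> simp [prefOf] at h ⊢ <;> linarith

/-- The Q-values of an agent with Q-values `p` after it expressed opinion `x` to a neighbour
preferring `c`. -/
def expressTo (α : ℝ) (c : Bool) (p : Bool → ℝ) (x : Bool) : Bool → ℝ :=
  Function.update p x ((1 - α) * p x + α * if x = c then 1 else -1)

def exploitExplore (α : ℝ) (c : Bool) (p : Bool → ℝ) : Bool → ℝ :=
  let p₁ := expressTo α c p (prefOf p)
  expressTo α c p₁ (!prefOf p₁)

section learning

variable {α : ℝ} {c : Bool} {p : Bool → ℝ}

@[simp]
lemma expressTo_self_self : expressTo α c p c c = (1 - α) * p c + α := by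
  simp [expressTo]

@[simp]
lemma expressTo_not_self_not_self : expressTo α c p (!c) (!c) = (1 - α) * p (!c) - α := by
  simp [expressTo]; ring

@[simp]
lemma expressTo_self_not_self : expressTo α c p c (!c) = p (!c) := by
  simp [expressTo]

@[simp]
lemma expressTo_not_self_self : expressTo α c p (!c) c = p c := by
  simp [expressTo]

lemma expressTo_mem_Icc (hα : α ∈ Set.Icc (0 : ℝ) 1) (hp : ∀ y, p y ∈ Set.Icc (-1 : ℝ) 1)
    (x y : Bool) : expressTo α c p x y ∈ Set.Icc (-1 : ℝ) 1 := by
  obtain ⟨hα0, hα1⟩ := hα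
  obtain ⟨hx0, hx1⟩ := hp x
  unfold expressTo
  rcases eq_or_ne y x with rfl | hyx
  · rw [Function.update_self]
    constructor <;> split_ifs <;> nlinarith
  · rw [Function.update_of_ne hyx]; exact hp y

lemma exploitExplore_mem_Icc (hα : α ∈ Set.Icc (0 : ℝ) 1) (hp : ∀ y, p y ∈ Set.Icc (-1 : ℝ) 1)
    (y : Bool) : exploitExplore α c p y ∈ Set.Icc (-1 : ℝ) 1 :=
  expressTo_mem_Icc hα (expressTo_mem_Icc hα hp _) _ y

lemma exploitExplore_iterate_mem_Icc (hα : α ∈ Set.Icc (0 : ℝ) 1)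
    (hp : ∀ y, p y ∈ Set.Icc (-1 : ℝ) 1) (m : ℕ) (y : Bool) :
    (exploitExplore α c)^[m] p y ∈ Set.Icc (-1 : ℝ) 1 := by
  induction m generalizing y with
  | zero => exact hp y
  | succ m ih =>
    rw [Function.iterate_succ_apply']
    exact exploitExplore_mem_Icc hα ih y

lemma exploitExplore_gap_of_prefOf_eq (hα : 0 ≤ α) (hp : ∀ y, p y ∈ Set.Icc (-1 : ℝ) 1)
    (hpc : prefOf p = c) :
    exploitExplore α c p c - exploitExplore α c p (!c) = (1 - α) * (p c - p (!c)) + 2 * α := by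
  simp only [exploitExplore, hpc]
  generalize hp₁ : expressTo α c p c = p₁
  have hq : prefOf p₁ = c := by
    rw [← hp₁]; exact prefOf_update_of_le hpc (by simp; nlinarith [(hp c).2])
  rw [hq, expressTo_not_self_self, expressTo_not_self_not_self, ← hp₁, expressTo_self_self,
    expressTo_self_not_self]
  ring

lemma exploitExplore_gap_of_prefOf_eq_not (hα : α ∈ Set.Ioo (0 : ℝ) 1)
    (hp : ∀ y, p y ∈ Set.Icc (-1 : ℝ) 1) (hpc : prefOf p = !c) :
    0 < exploitExplore α c p c - exploitExplore α c p (!c) ∨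
      exploitExplore α c p c - exploitExplore α c p (!c) = (1 - α) * (p c - p (!c)) + 2 * α := by
  obtain ⟨hα0, hα1⟩ := hα
  simp only [exploitExplore, hpc]
  generalize hp₁ : expressTo α c p (!c) = p₁
  have hp₁c : p₁ c = p c := by rw [← hp₁, expressTo_not_self_self]
  have hp₁nc : p₁ (!c) = (1 - α) * p (!c) - α := by rw [← hp₁, expressTo_not_self_not_self]
  rcases Bool.eq_or_eq_not (prefOf p₁) c with hq | hq
  · -- Exploring lowers `p₁ (!c) ≤ p₁ c` once more, strictly since `p₁ (!c) > -1`: otherwise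
    -- `p (!c) = -1` too, so `p₁ = p`, contradicting `prefOf p₁ ≠ prefOf p`.
    left
    have hle : p₁ (!c) ≤ p₁ c := by simpa using le_of_prefOf_eq hq
    have hmoved : p₁ (!c) ≠ p (!c) := by
      intro heq
      have : p₁ = p := by
        funext y
        rcases Bool.eq_or_eq_not y c with rfl | rfl
        · exact hp₁c
        · exact heq
      rw [this, hpc] at hq
      exact Bool.not_ne_self c hq
    rw [hq, expressTo_not_self_self, expressTo_not_self_not_self, hp₁c, hp₁nc]
    rw [hp₁c, hp₁nc] at hle
    rw [hp₁nc] at hmoved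
    have : 0 < p (!c) + 1 := by
      rcases (hp (!c)).1.lt_or_eq with h | h
      · linarith
      · exact absurd (by rw [← h]; ring) hmoved
    nlinarith [mul_pos hα0 (mul_pos (sub_pos.2 hα1) this)]
  · right
    rw [hq, Bool.not_not, expressTo_self_self, expressTo_self_not_self, hp₁c, hp₁nc]
    ring

lemma exploitExplore_gap (hα : α ∈ Set.Ioo (0 : ℝ) 1) (hp : ∀ y, p y ∈ Set.Icc (-1 : ℝ) 1) :
    0 < exploitExplore α c p c - exploitExplore α c p (!c) ∨
      exploitExplore α c p c - exploitExplore α c p (!c) = (1 - α) * (p c - p (!c)) + 2 * α := by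
  rcases Bool.eq_or_eq_not (prefOf p) c with hpc | hpc
  · exact Or.inr (exploitExplore_gap_of_prefOf_eq hα.1.le hp hpc)
  · exact exploitExplore_gap_of_prefOf_eq_not hα hp hpc

lemma exploitExplore_iterate_gap (hα : α ∈ Set.Ioo (0 : ℝ) 1)
    (hp : ∀ y, p y ∈ Set.Icc (-1 : ℝ) 1) (m : ℕ) :
    0 < (exploitExplore α c)^[m] p c - (exploitExplore α c)^[m] p (!c) ∨
      2 - 4 * (1 - α) ^ m ≤ (exploitExplore α c)^[m] p c - (exploitExplore α c)^[m] p (!c) := by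
  induction m with
  | zero =>
    right
    have := hp c; have := hp (!c)
    simp only [Function.iterate_zero, id, pow_zero, Set.mem_Icc] at *
    linarith
  | succ m ih =>
    obtain ⟨hα0, hα1⟩ := hα
    simp only [Function.iterate_succ_apply']
    rcases exploitExplore_gap ⟨hα0, hα1⟩
      (exploitExplore_iterate_mem_Icc ⟨hα0.le, hα1.le⟩ hp m) with h | h
    · exact Or.inl h
    · rw [h, pow_succ]
      rcases ih with ih | ih
      · left; nlinarith
      · right; nlinarith

lemma exploitExplore_iterate_lt (hα : α ∈ Set.Ioo (0 : ℝ) 1)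
    (hp : ∀ y, p y ∈ Set.Icc (-1 : ℝ) 1) {m : ℕ} (hm : (1 - α) ^ m < 1 / 2) :
    (exploitExplore α c)^[m] p (!c) < (exploitExplore α c)^[m] p c := by
  rcases exploitExplore_iterate_gap hα hp m with h | h <;> linarith

end learning

section arlodStep

variable {N : ℕ} {G : SimpleGraph (Fin N)} [DecidableRel G.Adj] {α : ℝ}

lemma arlodStep_apply_of_ne (q : Fin N → Bool → ℝ) {i j v : Fin N} (e : Bool) (hv : v ≠ i) :
    arlodStep G α q i j e v = q v := by
  unfold arlodStep
  split_ifs <;> simp [hv]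

lemma arlodStep_apply_self (q : Fin N → Bool → ℝ) {i j : Fin N} (e : Bool) (h : G.Adj i j) :
    arlodStep G α q i j e i =
      expressTo α (prefOf (q j)) (q i) (if e then !prefOf (q i) else prefOf (q i)) := by
  funext x
  simp only [arlodStep, if_pos h, expressTo, Function.update_apply, true_and]

lemma arlodStep_mem_Icc (hα : α ∈ Set.Icc (0 : ℝ) 1) {q : Fin N → Bool → ℝ}
    (hq : ∀ v x, q v x ∈ Set.Icc (-1 : ℝ) 1) (i j : Fin N) (e : Bool) (v : Fin N) (x : Bool) :
    arlodStep G α q i j e v x ∈ Set.Icc (-1 : ℝ) 1 := by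
  by_cases h : G.Adj i j
  · rcases eq_or_ne v i with rfl | hv
    · rw [arlodStep_apply_self q e h]; exact expressTo_mem_Icc hα (hq v) _ x
    · rw [arlodStep_apply_of_ne q e hv]; exact hq v x
  · simp only [arlodStep, if_neg h]; exact hq v x

lemma arlodStep_alternating {q : ℕ → Fin N → Bool → ℝ} {i k : Fin N} (hik : G.Adj i k) {n : ℕ}
    (hstep : ∀ s < 2 * n, q (s + 1) = arlodStep G α (q s) i k s.bodd) :
    q (2 * n) k = q 0 k ∧ q (2 * n) i = (exploitExplore α (prefOf (q 0 k)))^[n] (q 0 i) := by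
  induction n with
  | zero => simp
  | succ n ih =>
    obtain ⟨hk, hi⟩ := ih fun s hs => hstep s (by omega)
    have h₂ : q (2 * (n + 1)) = arlodStep G α (arlodStep G α (q (2 * n)) i k false) i k true := by
      rw [show 2 * (n + 1) = 2 * n + 1 + 1 by ring, hstep (2 * n + 1) (by omega),
        hstep (2 * n) (by omega)]
      simp [Nat.bodd_mul]
    rw [h₂, arlodStep_apply_of_ne _ _ hik.ne', arlodStep_apply_of_ne _ _ hik.ne',
      arlodStep_apply_self _ _ hik, arlodStep_apply_self _ _ hik, arlodStep_apply_of_ne _ _ hik.ne',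
      Function.iterate_succ_apply', ← hi, hk]
    exact ⟨rfl, rfl⟩

end arlodStep

section process

variable {N : ℕ} {G : SimpleGraph (Fin N)} [DecidableRel G.Adj] {α : ℝ} {Ω : Type*}
  {A J : ℕ → Ω → Fin N} {X : ℕ → Ω → Bool} {Q : ℕ → Ω → Fin N → Bool → ℝ}

lemma arlod_mem_Icc (hα : α ∈ Set.Icc (0 : ℝ) 1)
    (hdyn : ∀ t ω, Q (t + 1) ω = arlodStep G α (Q t ω) (A t ω) (J t ω) (X t ω))
    (h0 : ∀ ω v x, Q 0 ω v x ∈ Set.Icc (-1 : ℝ) 1) (t : ℕ) (ω : Ω) (v : Fin N) (x : Bool) :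
    Q t ω v x ∈ Set.Icc (-1 : ℝ) 1 := by
  induction t generalizing v x with
  | zero => exact h0 ω v x
  | succ t ih => rw [hdyn]; exact arlodStep_mem_Icc hα ih _ _ _ _ _

def alternatingEvent (A J : ℕ → Ω → Fin N) (X : ℕ → Ω → Bool) (i k : Fin N) (t₀ n : ℕ) :
    Set Ω :=
  ⋂ t ∈ Finset.Ico t₀ (t₀ + 2 * n), (fun ω => (A t ω, J t ω, X t ω)) ⁻¹' {(i, k, (t - t₀).bodd)}

lemma mem_alternatingEvent_iff {i k : Fin N} {t₀ n : ℕ} {ω : Ω} :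
    ω ∈ alternatingEvent A J X i k t₀ n ↔
      ∀ s < 2 * n, A (t₀ + s) ω = i ∧ J (t₀ + s) ω = k ∧ X (t₀ + s) ω = s.bodd := by
  simp only [alternatingEvent, Set.mem_iInter₂, Set.mem_preimage, Set.mem_singleton_iff,
    Prod.mk.injEq, Finset.mem_Ico]
  constructor
  · intro h s hs
    simpa using h (t₀ + s) ⟨by omega, by omega⟩
  · intro h t ht
    simpa [Nat.add_sub_cancel' ht.1] using h (t - t₀) (by omega)

lemma arlod_switches_of_mem_alternatingEvent (hα : α ∈ Set.Ioo (0 : ℝ) 1)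
    (hdyn : ∀ t ω, Q (t + 1) ω = arlodStep G α (Q t ω) (A t ω) (J t ω) (X t ω))
    (h0 : ∀ ω v x, Q 0 ω v x ∈ Set.Icc (-1 : ℝ) 1) {i k : Fin N} (hik : G.Adj i k)
    {t₀ n : ℕ} {ω : Ω} (hω : ω ∈ alternatingEvent A J X i k t₀ n) {o : Bool}
    (hk : Q t₀ ω k o < Q t₀ ω k (!o)) (hn : (1 - α) ^ n < 1 / 2) :
    Q (t₀ + 2 * n) ω i o < Q (t₀ + 2 * n) ω i (!o) := by
  have hstep : ∀ s < 2 * n,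
      Q (t₀ + (s + 1)) ω = arlodStep G α (Q (t₀ + s) ω) i k s.bodd := by
    intro s hs
    obtain ⟨hA, hJ, hX⟩ := mem_alternatingEvent_iff.mp hω s hs
    rw [← add_assoc, hdyn, hA, hJ, hX]
  have hc : prefOf (Q t₀ ω k) = !o := prefOf_eq_of_lt (by rwa [Bool.not_not])
  rw [(arlodStep_alternating (q := fun s => Q (t₀ + s) ω) hik hstep).2, add_zero, hc]
  simpa using exploitExplore_iterate_lt (c := !o) hα
    (arlod_mem_Icc (Set.Ioo_subset_Icc_self hα) hdyn h0 t₀ ω i) hn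

lemma arlod_ofReal_le_measure_alternatingEvent [MeasurableSpace Ω] {P : Measure Ω} {ε : ℝ}
    (hε : ε ∈ Set.Ioo (0 : ℝ) 1) (hindep : iIndepFun (fun t ω => (A t ω, J t ω, X t ω)) P)
    (hlaw : ∀ (t : ℕ) (i j : Fin N) (e : Bool),
      P {ω | (A t ω, J t ω, X t ω) = (i, j, e)} =
        ENNReal.ofReal ((1 / (N : ℝ)) * (if G.Adj i j then 1 / (G.degree i : ℝ) else 0) *
          (if e then ε else 1 - ε)))
    {i k : Fin N} (hik : G.Adj i k) (t₀ n : ℕ) :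
    ENNReal.ofReal ((1 - ε) ^ n * ε ^ n * (1 / ((N : ℝ) * ((N : ℝ) - 1))) ^ (2 * n)) ≤
      P (alternatingEvent A J X i k t₀ n) := by
  have hc : 0 < 1 / ((N : ℝ) * ((N : ℝ) - 1)) := by simpa using G.one_div_card_mul_pos hik
  have hw : ∀ e : Bool, 0 ≤ if e then ε else 1 - ε := fun e => by
    obtain ⟨hε0, hε1⟩ := hε
    split_ifs <;> linarith
  unfold alternatingEvent
  convert hindep.ofReal_pow_le_measure_alternating (fun e => (i, k, e))
    (p := fun e => 1 / ((N : ℝ) * ((N : ℝ) - 1)) * if e then ε else 1 - ε)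
    (fun e => mul_nonneg hc.le (hw e)) (fun t e => ?_) t₀ n using 2
  · simp only [Bool.false_eq_true, if_false, if_true, mul_pow]; ring
  · simp only [Set.preimage, Set.mem_singleton_iff]
    rw [hlaw, if_pos hik]
    exact ENNReal.ofReal_le_ofReal <|
      mul_le_mul_of_nonneg_right (by simpa using G.one_div_card_mul_le hik) (hw e)

end process

theorem stmt11_general {N : ℕ} (G : SimpleGraph (Fin N)) [DecidableRel G.Adj]
    (α ε : ℝ) (hα : α ∈ Set.Ioo (0 : ℝ) 1) (hε : ε ∈ Set.Ioo (0 : ℝ) 1)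
    {Ω : Type*} [MeasurableSpace Ω] (P : Measure Ω)
    (A J : ℕ → Ω → Fin N) (X : ℕ → Ω → Bool)
    (hmeas : ∀ t : ℕ, Measurable (fun ω => (A t ω, J t ω, X t ω)))
    (hindep : iIndepFun (fun t ω => (A t ω, J t ω, X t ω)) P)
    (hlaw : ∀ (t : ℕ) (i j : Fin N) (e : Bool),
      P {ω | (A t ω, J t ω, X t ω) = (i, j, e)} =
        ENNReal.ofReal ((1 / (N : ℝ)) * (if G.Adj i j then 1 / (G.degree i : ℝ) else 0) *
          (if e then ε else 1 - ε)))
    (Q : ℕ → Ω → Fin N → Bool → ℝ) (q0 : Fin N → Bool → ℝ)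
    (hQ0 : ∀ ω, Q 0 ω = q0) (hq0mem : ∀ i o, q0 i o ∈ Set.Icc (-1 : ℝ) 1)
    (hdyn : ∀ (t : ℕ) (ω : Ω),
      Q (t + 1) ω = arlodStep G α (Q t ω) (A t ω) (J t ω) (X t ω))
    (t0 : ℕ) (i k : Fin N) (hik : G.Adj i k) (o : Bool) (ξ : ℝ) (hξ : ξ ∈ Set.Ioo 0 α)
    (r : ℕ) (hr : r = (⌈Real.log ξ / Real.log (1 - α)⌉).toNat) :
    ENNReal.ofReal ((1 - ε) ^ (r + 1) * ε ^ (r + 1) *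
        (1 / ((N : ℝ) * ((N : ℝ) - 1))) ^ (2 * r + 2)) *
      P {ω | Q t0 ω i (!o) < Q t0 ω i o ∧ Q t0 ω k o < Q t0 ω k (!o)} ≤
      P ({ω | Q (t0 + 2 * r + 2) ω i o < Q (t0 + 2 * r + 2) ω i (!o)} ∩
        {ω | Q t0 ω i (!o) < Q t0 ω i o ∧ Q t0 ω k o < Q t0 ω k (!o)}) ∧
      0 < (1 - ε) ^ (r + 1) * ε ^ (r + 1) * (1 / ((N : ℝ) * ((N : ℝ) - 1))) ^ (2 * r + 2) := by
  have hc : 0 < 1 / ((N : ℝ) * ((N : ℝ) - 1)) := by simpa using G.one_div_card_mul_pos hik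
  refine ⟨?_, by have := sub_pos.2 hε.2; have := hε.1; positivity⟩
  have h0 : ∀ ω v x, Q 0 ω v x ∈ Set.Icc (-1 : ℝ) 1 := fun ω => hQ0 ω ▸ hq0mem
  set E₀ := {ω | Q t0 ω i (!o) < Q t0 ω i o ∧ Q t0 ω k o < Q t0 ω k (!o)}
  set M := alternatingEvent A J X i k t0 (r + 1)
  have hswitch : M ∩ E₀ ⊆ {ω | Q (t0 + 2 * r + 2) ω i o < Q (t0 + 2 * r + 2) ω i (!o)} ∩ E₀ :=
    fun ω hω => ⟨arlod_switches_of_mem_alternatingEvent hα hdyn h0 hik hω.1 hω.2.2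
      (hr ▸ one_sub_pow_toNat_ceil_succ_lt_half hα hξ), hω.2⟩
  have hME : P (M ∩ E₀) = P M * P E₀ := by
    refine hindep.measure_inter_eq_mul_of_determined hmeas
      (Finset.Ico_disjoint_Ico_consecutive 0 t0 (t0 + 2 * (r + 1))).symm
      (fun ω ω' h hω => ?_) (fun ω ω' h hω => ?_)
    · simp only [M, alternatingEvent, Set.mem_iInter₂, Set.mem_preimage] at hω ⊢
      exact fun t ht => h t ht ▸ hω t ht
    · have := eq_of_inputs_eq (Y := fun t ω => (A t ω, J t ω, X t ω))
        (fun q y => arlodStep G α q y.1 y.2.1 y.2.2) hdyn (by rw [hQ0, hQ0])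
        (fun s hs => h s (by simpa using hs)) (t := t0)
      simpa [E₀, this] using hω
  calc _ ≤ P M * P E₀ := by
        rw [show 2 * r + 2 = 2 * (r + 1) by ring]
        gcongr
        exact arlod_ofReal_le_measure_alternatingEvent hε hindep hlaw hik t0 (r + 1)
    _ = P (M ∩ E₀) := hME.symm
    _ ≤ _ := measure_mono hswitch

/-- In the ARLOD model with learning rate `α ∈ (0,1)` and exploration rate
`ε ∈ (0,1)` on a finite connected graph with `N` agents, suppose at time `t0` agent `i`
prefers opinion `o` and has a neighbour `k` who prefers opinion `−o` (an event `E0`).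
Fix `ξ ∈ (0,α)` and let `r = ⌈log(ξ)/log(1−α)⌉`. Then the probability that agent `i`'s
preferred opinion has switched to `−o` by time `t0 + 2r + 2` (together with `E0`) is at
least `(1−ε)^{r+1} ε^{r+1} (1/(N(N−1)))^{2r+2} · P(E0)`, and this factor is strictly
positive. -/
theorem stmt11 {N : ℕ} (hN : 0 < N) (G : SimpleGraph (Fin N)) [DecidableRel G.Adj]
    (hG : G.Connected) (α ε : ℝ) (hα : α ∈ Set.Ioo (0 : ℝ) 1) (hε : ε ∈ Set.Ioo (0 : ℝ) 1)
    {Ω : Type*} [MeasurableSpace Ω] (P : Measure Ω) [IsProbabilityMeasure P]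
    (A J : ℕ → Ω → Fin N) (X : ℕ → Ω → Bool)
    (hmeas : ∀ t : ℕ, Measurable (fun ω => (A t ω, J t ω, X t ω)))
    (hindep : iIndepFun (fun t ω => (A t ω, J t ω, X t ω)) P)
    (hlaw : ∀ (t : ℕ) (i j : Fin N) (e : Bool),
      P {ω | (A t ω, J t ω, X t ω) = (i, j, e)} =
        ENNReal.ofReal ((1 / (N : ℝ)) * (if G.Adj i j then 1 / (G.degree i : ℝ) else 0) *
          (if e then ε else 1 - ε)))
    (Q : ℕ → Ω → Fin N → Bool → ℝ) (q0 : Fin N → Bool → ℝ)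
    (hQ0 : ∀ ω, Q 0 ω = q0) (hq0mem : ∀ i o, q0 i o ∈ Set.Icc (-1 : ℝ) 1)
    (hdyn : ∀ (t : ℕ) (ω : Ω),
      Q (t + 1) ω = arlodStep G α (Q t ω) (A t ω) (J t ω) (X t ω))
    (t0 : ℕ) (i k : Fin N) (hik : G.Adj i k) (o : Bool) (ξ : ℝ) (hξ : ξ ∈ Set.Ioo 0 α)
    (r : ℕ) (hr : r = (⌈Real.log ξ / Real.log (1 - α)⌉).toNat) :
    ENNReal.ofReal ((1 - ε) ^ (r + 1) * ε ^ (r + 1) *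
        (1 / ((N : ℝ) * ((N : ℝ) - 1))) ^ (2 * r + 2)) *
      P {ω | Q t0 ω i (!o) < Q t0 ω i o ∧ Q t0 ω k o < Q t0 ω k (!o)} ≤
      P ({ω | Q (t0 + 2 * r + 2) ω i o < Q (t0 + 2 * r + 2) ω i (!o)} ∩
        {ω | Q t0 ω i (!o) < Q t0 ω i o ∧ Q t0 ω k o < Q t0 ω k (!o)}) ∧
      0 < (1 - ε) ^ (r + 1) * ε ^ (r + 1) * (1 / ((N : ℝ) * ((N : ℝ) - 1))) ^ (2 * r + 2) :=
  stmt11_general G α ε hα hε P A J X hmeas hindep hlaw Q q0 hQ0 hq0mem hdyn t0 i k hik o ξ hξ r hr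

end
end
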